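/- Let r : ℂ × ℂ → ℂ be analytic on an open neighborhood of (0,0), let m ≥ 0, and for (x, a) = (x, a_0, …, a_m) near 0 in ℂ × ℂ^{m+1} define h(x, a) := r(x, Σ_{i=0}^m a_i x^i). For each nonnegative integer i define h_i(a) := (1/i!) · (∂^i h/∂x^i)(0, a), a holomorphic function of a on a neighborhood of 0 in ℂ^{m+1}. Then for all nonnegative integers i, j, k with 0 ≤ j ≤ m and 0 ≤ k + j − i ≤ m, the identity ∂h_i/∂a_j = ∂h_k/∂a_{k+j−i} holds on a neighborhood of 0 in ℂ^{m+1}. -/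

import Mathlib

/-!
Differentiating `h(x, a) = r(x, ∑ aₗ xˡ)` in `a_j` gives `xʲ · u_a(x)` with
`u_a(x) = ∂₂r(x, ∑ aₗ xˡ)`. The `a`-derivative commutes with the `x`-derivatives (symmetry of the
second derivative of the analytic function `h`), so `∂h_i/∂a_j` is the `i`-th Taylor coefficient
of `xʲ u_a` at `0`, that is, the `(i - j)`-th Taylor coefficient of `u_a` (or `0` if `j > i`).
This depends on `i - j` only, and `k - (k + j - i) = i - j`.
-/

open Function Topology Nat

section

variable {𝕜 : Type*} [NontriviallyNormedField 𝕜]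
  {E F : Type*} [NormedAddCommGroup E] [NormedSpace 𝕜 E] [NormedAddCommGroup F] [NormedSpace 𝕜 F]

section PartialDerivatives

variable {f : 𝕜 → E → F} {x : 𝕜} {a : E}

theorem DifferentiableAt.deriv_uncurry_left (hf : DifferentiableAt 𝕜 (uncurry f) (x, a)) :
    deriv (f · a) x = fderiv 𝕜 (uncurry f) (x, a) (1, 0) := by
  have h := (hf.hasFDerivAt.comp x (hasFDerivAt_prodMk_left (𝕜 := 𝕜) x a)).hasDerivAt
  exact h.deriv

theorem DifferentiableAt.fderiv_uncurry_right (hf : DifferentiableAt 𝕜 (uncurry f) (x, a))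
    (v : E) : fderiv 𝕜 (f x) a v = fderiv 𝕜 (uncurry f) (x, a) (0, v) := by
  have h := hf.hasFDerivAt.comp a (hasFDerivAt_prodMk_right (𝕜 := 𝕜) x a)
  exact congrArg (· v) h.fderiv

variable [CompleteSpace F]

theorem AnalyticAt.uncurry_deriv (hf : AnalyticAt 𝕜 (uncurry f) (x, a)) :
    AnalyticAt 𝕜 (uncurry fun x a => deriv (f · a) x) (x, a) := by
  have h := ((ContinuousLinearMap.apply 𝕜 F ((1 : 𝕜), (0 : E))).analyticAt _).comp hf.fderiv
  refine h.congr ?_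
  filter_upwards [hf.eventually_analyticAt] with z hz
  exact hz.differentiableAt.deriv_uncurry_left.symm

theorem AnalyticAt.uncurry_iteratedDeriv (n : ℕ) (hf : AnalyticAt 𝕜 (uncurry f) (x, a)) :
    AnalyticAt 𝕜 (uncurry fun x a => iteratedDeriv n (f · a) x) (x, a) := by
  induction n generalizing f with
  | zero => simpa using hf
  | succ n ih => simpa only [iteratedDeriv_succ'] using ih hf.uncurry_deriv

theorem AnalyticAt.fderiv_deriv_comm (hf : AnalyticAt 𝕜 (uncurry f) (x, a)) (v : E) :
    fderiv 𝕜 (fun a' => deriv (f · a') x) a v = deriv (fun x' => fderiv 𝕜 (f x') a v) x := by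
  set Φ := uncurry f
  have hΦ' : DifferentiableAt 𝕜 (fderiv 𝕜 Φ) (x, a) := hf.fderiv.differentiableAt
  have hd (w : 𝕜 × E) : DifferentiableAt 𝕜 (fun z => fderiv 𝕜 Φ z w) (x, a) :=
    hΦ'.clm_apply (differentiableAt_const w)
  have hsnd (w u : 𝕜 × E) :
      fderiv 𝕜 (fun z => fderiv 𝕜 Φ z w) (x, a) u = fderiv 𝕜 (fderiv 𝕜 Φ) (x, a) u w := by
    simp [fderiv_clm_apply hΦ' (differentiableAt_const w)]
  have hnear : ∀ᶠ z in 𝓝 (x, a), DifferentiableAt 𝕜 Φ z :=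
    hf.eventually_analyticAt.mono fun _ h => h.differentiableAt
  have hleft : (fun a' => deriv (f · a') x) =ᶠ[𝓝 a] fun a' => fderiv 𝕜 Φ (x, a') (1, 0) :=
    ((Continuous.prodMk_right x).tendsto a).eventually hnear |>.mono
      fun _ h => h.deriv_uncurry_left
  have hright : (fun x' => fderiv 𝕜 (f x') a v) =ᶠ[𝓝 x] fun x' => fderiv 𝕜 Φ (x', a) (0, v) :=
    ((Continuous.prodMk_left a).tendsto x).eventually hnear |>.mono
      fun _ h => h.fderiv_uncurry_right v
  -- both sides are values of the second derivative of `Φ` at `(x, a)`, in the two orders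
  rw [hleft.fderiv_eq, hright.deriv_eq,
    DifferentiableAt.fderiv_uncurry_right (f := fun x' a' => fderiv 𝕜 Φ (x', a') (1, 0)) (hd _),
    DifferentiableAt.deriv_uncurry_left (f := fun x' a' => fderiv 𝕜 Φ (x', a') (0, v)) (hd _)]
  exact (hsnd _ _).trans <|
    ((hf.contDiffAt.isSymmSndFDerivAt le_top).eq _ _).trans (hsnd _ _).symm

theorem AnalyticAt.fderiv_iteratedDeriv_comm (n : ℕ) (hf : AnalyticAt 𝕜 (uncurry f) (x, a))
    (v : E) :
    fderiv 𝕜 (fun a' => iteratedDeriv n (f · a') x) a v =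
      iteratedDeriv n (fun x' => fderiv 𝕜 (f x') a v) x := by
  induction n generalizing f with
  | zero => simp
  | succ n ih =>
    have hcomm : (fun x' => fderiv 𝕜 (fun a' => deriv (f · a') x') a v) =ᶠ[𝓝 x]
        deriv (fun x' => fderiv 𝕜 (f x') a v) :=
      ((Continuous.prodMk_left a).tendsto x).eventually hf.eventually_analyticAt |>.mono
        fun _ h => h.fderiv_deriv_comm v
    simp only [iteratedDeriv_succ']
    rw [ih hf.uncurry_deriv, hcomm.iteratedDeriv_eq]

end PartialDerivatives

noncomputable def taylorCoeff (f : 𝕜 → 𝕜) (k : ℕ) (x₀ : 𝕜) : 𝕜 :=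
  1 / (k ! : 𝕜) * iteratedDeriv k f x₀

theorem taylorCoeff_pow_mul [CharZero 𝕜] {u : 𝕜 → 𝕜} {n : ℕ} (hu : ContDiffAt 𝕜 n u 0)
    (s : ℕ) :
    taylorCoeff (fun x => x ^ s * u x) n 0 = if s ≤ n then taylorCoeff u (n - s) 0 else 0 := by
  rw [taylorCoeff, iteratedDeriv_fun_mul (f := fun x => x ^ s) (by fun_prop) hu]
  simp only [iteratedDeriv_fun_pow_zero, Nat.cast_ite, Nat.cast_zero, mul_ite, ite_mul, mul_zero,
    zero_mul, Finset.sum_ite_eq', Finset.mem_range, Nat.lt_succ_iff]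
  split_ifs with hs
  · rw [taylorCoeff, Nat.cast_choose 𝕜 hs]
    field_simp [Nat.factorial_ne_zero]
  · rfl

theorem AnalyticAt.fderiv_taylorCoeff_comm [CompleteSpace 𝕜] {f : 𝕜 → E → 𝕜} {x : 𝕜} {a : E}
    (n : ℕ) (hf : AnalyticAt 𝕜 (uncurry f) (x, a)) (v : E) :
    fderiv 𝕜 (fun a' => taylorCoeff (f · a') n x) a v =
      taylorCoeff (fun x' => fderiv 𝕜 (f x') a v) n x := by
  have hd : DifferentiableAt 𝕜 (fun a' => iteratedDeriv n (f · a') x) a :=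
    ((hf.uncurry_iteratedDeriv n).comp (analyticAt_const.prod analyticAt_id)).differentiableAt
  simp only [taylorCoeff]
  rw [fderiv_const_mul hd, smul_apply, smul_eq_mul, hf.fderiv_iteratedDeriv_comm]

theorem fderiv_comp_sum_mul_apply_single {ι : Type*} [Fintype ι] [DecidableEq ι]
    {r : E × 𝕜 → F} {x : E} {c a : ι → 𝕜} (hr : DifferentiableAt 𝕜 r (x, ∑ l, a l * c l))
    (j : ι) :
    fderiv 𝕜 (fun b : ι → 𝕜 => r (x, ∑ l, b l * c l)) a (Pi.single j 1) =
      c j • fderiv 𝕜 r (x, ∑ l, a l * c l) (0, 1) := by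
  have hsum : HasFDerivAt (fun b : ι → 𝕜 => ∑ l, b l * c l)
      (∑ l, c l • ContinuousLinearMap.proj l) a :=
    HasFDerivAt.fun_sum fun l _ => (hasFDerivAt_apply (𝕜 := 𝕜) l a).mul_const (c l)
  have hcomp : HasFDerivAt (fun b : ι → 𝕜 => r (x, ∑ l, b l * c l)) _ a :=
    hr.hasFDerivAt.comp a ((hasFDerivAt_const x a).prodMk hsum)
  rw [hcomp.fderiv]
  simp [Pi.single_apply, ← ContinuousLinearMap.map_smul]

theorem fderiv_taylorCoeff_comp_sum_mul_pow_apply_single [CompleteSpace 𝕜] [CharZero 𝕜]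
    {ι : Type*} [Fintype ι] [DecidableEq ι] {r : 𝕜 × 𝕜 → 𝕜} {e : ι → ℕ} {a : ι → 𝕜}
    (hr : AnalyticAt 𝕜 r (0, ∑ l, a l * 0 ^ e l)) (n : ℕ) (j : ι) :
    fderiv 𝕜 (fun b => taylorCoeff (fun x => r (x, ∑ l, b l * x ^ e l)) n 0) a (Pi.single j 1) =
      if e j ≤ n then
        taylorCoeff (fun x => fderiv 𝕜 r (x, ∑ l, a l * x ^ e l) (0, 1)) (n - e j) 0
      else 0 := by
  have hpath : AnalyticAt 𝕜 (fun z : 𝕜 × (ι → 𝕜) => (z.1, ∑ l, z.2 l * z.1 ^ e l)) (0, a) :=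
    analyticAt_fst.prod <| Finset.analyticAt_fun_sum _ fun l _ =>
      (analyticAt_pi_iff.1 analyticAt_snd l).fun_mul (analyticAt_fst.fun_pow _)
  have hH : AnalyticAt 𝕜 (uncurry fun x b => r (x, ∑ l, b l * x ^ e l)) (0, a) :=
    hr.comp_of_eq hpath rfl
  have hcurve : AnalyticAt 𝕜 (fun x => (x, ∑ l, a l * x ^ e l)) 0 := by fun_prop
  have hnear : ∀ᶠ x in 𝓝 0, AnalyticAt 𝕜 r (x, ∑ l, a l * x ^ e l) :=
    hcurve.continuousAt.eventually hr.eventually_analyticAt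
  have hu : AnalyticAt 𝕜 (fun x => fderiv 𝕜 r (x, ∑ l, a l * x ^ e l) (0, 1)) 0 :=
    ((ContinuousLinearMap.apply 𝕜 𝕜 ((0 : 𝕜), (1 : 𝕜))).analyticAt _).comp
      (hr.fderiv.comp_of_eq hcurve rfl)
  have heq : (fun x => fderiv 𝕜 (fun b => r (x, ∑ l, b l * x ^ e l)) a (Pi.single j 1)) =ᶠ[𝓝 0]
      fun x => x ^ e j * fderiv 𝕜 r (x, ∑ l, a l * x ^ e l) (0, 1) :=
    hnear.mono fun x hx => fderiv_comp_sum_mul_apply_single hx.differentiableAt j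
  rw [hH.fderiv_taylorCoeff_comm, taylorCoeff, heq.iteratedDeriv_eq, ← taylorCoeff,
    taylorCoeff_pow_mul hu.contDiffAt]

end

/-- Let `r : ℂ × ℂ → ℂ` be analytic near `(0,0)`, `m ≥ 0`, and for
`(x, a)` near `0` in `ℂ × ℂ^{m+1}` set `h(x, a) := r(x, ∑_{l=0}^m a_l x^l)`.  For `i ≥ 0` let
`h_i(a) := (1/i!) · (∂^i h/∂x^i)(0, a)`.  Then for all `i, j, k` with `0 ≤ j ≤ m` and
`0 ≤ k + j − i ≤ m`, the identity `∂h_i/∂a_j = ∂h_k/∂a_{k+j−i}` holds on a neighborhood of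
`0` in `ℂ^{m+1}`. -/
theorem pderiv_taylorCoeff_symm (m : ℕ) (r : ℂ × ℂ → ℂ) (hr : AnalyticAt ℂ r (0, 0))
    (h : ℂ → (Fin (m + 1) → ℂ) → ℂ)
    (hdef : ∀ x a, h x a = r (x, ∑ l : Fin (m + 1), a l * x ^ (l : ℕ)))
    (hc : ℕ → (Fin (m + 1) → ℂ) → ℂ)
    (hcdef : ∀ i a, hc i a = (1 / (i.factorial : ℂ)) * iteratedDeriv i (fun x => h x a) 0)
    (i j k : ℕ) (hj : j ≤ m) (hik : i ≤ k + j) (hkji : k + j - i ≤ m) :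
    ∀ᶠ a in nhds (0 : Fin (m + 1) → ℂ),
      fderiv ℂ (hc i) a (Pi.single (⟨j, by omega⟩ : Fin (m + 1)) 1) =
        fderiv ℂ (hc k) a (Pi.single (⟨k + j - i, by omega⟩ : Fin (m + 1)) 1) := by
  have hc_eq (n : ℕ) :
      hc n = fun b => taylorCoeff (fun x => r (x, ∑ l : Fin (m + 1), b l * x ^ (l : ℕ))) n 0 := by
    funext b
    simp only [hcdef, hdef, taylorCoeff]
  have hnear : ∀ᶠ a in 𝓝 (0 : Fin (m + 1) → ℂ),
      AnalyticAt ℂ r (0, ∑ l : Fin (m + 1), a l * 0 ^ (l : ℕ)) := by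
    have hcont : Continuous fun a : Fin (m + 1) → ℂ =>
        ((0 : ℂ), ∑ l : Fin (m + 1), a l * 0 ^ (l : ℕ)) := by
      fun_prop
    refine hcont.continuousAt.eventually ?_
    simpa using hr.eventually_analyticAt
  filter_upwards [hnear] with a ha
  rw [hc_eq, hc_eq, fderiv_taylorCoeff_comp_sum_mul_pow_apply_single ha,
    fderiv_taylorCoeff_comp_sum_mul_pow_apply_single ha]
  simp only [show k - (k + j - i) = i - j by omega]
  exact if_congr (by omega) rfl rfl
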